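/- Let A be an invertible n×n real matrix with rows a₁ᵀ,…,aₙᵀ, let G be a connected undirected simple graph on n vertices (n ≥ 2) with Laplacian L, let Pᵢ = I − aᵢaᵢᵀ/(aᵢᵀaᵢ), P = diag(P₁,…,Pₙ), and L̄ = L ⊗ Iₙ. Let ρ denote the smallest nonzero eigenvalue of the symmetric positive semidefinite matrix P L̄ P (equivalently, of P L̄), and let λ₂(L) denote the second-smallest eigenvalue of L counted with multiplicity (the algebraic connectivity of G). Then ρ ≤ λ₂(L). -/

import Mathlib

/-!
Write `M = P L̄ P`. On vectors fixed by `P` the quadratic form of `M` is that of `L̄`. The kernel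
of `L̄` meets the range of `P` trivially: if `y = P y` and `yᵀ L̄ y = 0`, then `y` is constant
along the connected graph, `y = 𝟙 ⊗ w`, and `Pᵢ w = w` for all `i` means `A w = 0`, so `w = 0`.
Hence `ker M = ker P`, and for `0 ≠ x = P x` (which is orthogonal to `ker M`) the spectral
decomposition gives `ρ ‖x‖² ≤ xᵀ M x = xᵀ L̄ x`.

Let `u, v` be orthonormal eigenvectors of `L` for its two smallest eigenvalues. Every
`x = u ⊗ w₁ + v ⊗ w₂` satisfies `xᵀ L̄ x ≤ λ₂ ‖x‖²`, and `P x = x` amounts to `n` linear conditions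
on the `2n` coordinates of `(w₁, w₂)`, so such a nonzero `x` exists.
-/

open Matrix
open scoped Kronecker

/-- The orthogonal projection `Pᵢ = I - aᵢaᵢᵀ/(aᵢᵀaᵢ)` onto the hyperplane `{z : aᵢᵀz = 0}`. -/
noncomputable def projMat {n : ℕ} (a : Fin n → ℝ) : Matrix (Fin n) (Fin n) ℝ :=
  1 - (a ⬝ᵥ a)⁻¹ • vecMulVec a a

/-- The block-diagonal matrix `P = diag(P₁,…,Pₘ)`, acting on `(ℝⁿ)ᵐ ≅ ℝ^{mn}`
(indexed by pairs `(block, coordinate)`). -/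
noncomputable def blockP {m n : ℕ} (a : Fin m → Fin n → ℝ) :
    Matrix (Fin m × Fin n) (Fin m × Fin n) ℝ :=
  Matrix.of fun p q => if p.1 = q.1 then projMat (a p.1) p.2 q.2 else 0

namespace OrthonormalBasis

variable {ι : Type*} [Fintype ι] (b : OrthonormalBasis ι ℝ (EuclideanSpace ℝ ι))

lemma dotProduct_eq_ite [DecidableEq ι] (i j : ι) :
    ⇑(b i) ⬝ᵥ ⇑(b j) = if i = j then 1 else 0 := by
  simpa [EuclideanSpace.inner_eq_star_dotProduct, dotProduct_comm]
    using orthonormal_iff_ite.mp b.orthonormal i j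

lemma sum_dotProduct_mul_dotProduct (x y : ι → ℝ) :
    ∑ i, (⇑(b i) ⬝ᵥ x) * (⇑(b i) ⬝ᵥ y) = x ⬝ᵥ y := by
  simpa [EuclideanSpace.inner_eq_star_dotProduct, dotProduct_comm]
    using b.sum_inner_mul_inner (WithLp.toLp 2 x) (WithLp.toLp 2 y)

lemma dotProduct_smul_add_smul_self [DecidableEq ι] {i j : ι} (hij : i ≠ j) (s t : ℝ) :
    (s • ⇑(b i) + t • ⇑(b j)) ⬝ᵥ (s • ⇑(b i) + t • ⇑(b j)) = s * s + t * t := by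
  simp [dotProduct_add, add_dotProduct, b.dotProduct_eq_ite, hij, hij.symm]

end OrthonormalBasis

lemma Multiset.two_le_countP_le_sort_getD_one {α : Type*} [LinearOrder α] (s : Multiset α)
    (hs : 2 ≤ Multiset.card s) (d : α) :
    2 ≤ s.countP (· ≤ (s.sort (· ≤ ·)).getD 1 d) := by
  obtain ⟨a, b, t, hl⟩ : ∃ a b t, s.sort (· ≤ ·) = a :: b :: t := by
    have hlen : 2 ≤ (s.sort (· ≤ ·)).length := by rwa [Multiset.length_sort]
    match s.sort (· ≤ ·), hlen with
    | a :: b :: t, _ => exact ⟨a, b, t, rfl⟩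
  have hab : a ≤ b := by
    have := s.pairwise_sort (· ≤ ·)
    simp_all
  have hb : (s.sort (· ≤ ·)).getD 1 d = b := by rw [hl]; rfl
  rw [hb, ← Multiset.sort_eq s (· ≤ ·), hl]
  simp [hab]

namespace Matrix.IsHermitian

variable {ι : Type*} [Fintype ι] [DecidableEq ι] {M : Matrix ι ι ℝ} (hM : M.IsHermitian)

lemma isRoot_charpoly_eigenvalues (i : ι) : M.charpoly.IsRoot (hM.eigenvalues i) :=
  Polynomial.isRoot_of_mem_roots (by simp [hM.roots_charpoly_eq_eigenvalues])

lemma mul_dotProduct_self_le_dotProduct_mulVec {ρ : ℝ}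
    (hρ : ∀ i, hM.eigenvalues i ≠ 0 → ρ ≤ hM.eigenvalues i) {x : ι → ℝ}
    (hx : ∀ f, M *ᵥ f = 0 → f ⬝ᵥ x = 0) : ρ * (x ⬝ᵥ x) ≤ x ⬝ᵥ (M *ᵥ x) := by
  set b := hM.eigenvectorBasis
  have hMb (i : ι) : ⇑(b i) ⬝ᵥ (M *ᵥ x) = hM.eigenvalues i * (⇑(b i) ⬝ᵥ x) := by
    rw [dotProduct_mulVec, ← mulVec_transpose, ← conjTranspose_eq_transpose_of_trivial, hM.eq,
      hM.mulVec_eigenvectorBasis, smul_dotProduct, smul_eq_mul]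
  rw [← b.sum_dotProduct_mul_dotProduct, ← b.sum_dotProduct_mul_dotProduct, Finset.mul_sum]
  refine Finset.sum_le_sum fun i _ => ?_
  rw [hMb]
  by_cases hi : hM.eigenvalues i = 0
  · have hbx : ⇑(b i) ⬝ᵥ x = 0 := hx _ (by rw [hM.mulVec_eigenvectorBasis, hi, zero_smul])
    simp [hbx]
  · nlinarith [hρ i hi, mul_self_nonneg (⇑(b i) ⬝ᵥ x)]

lemma exists_ne_eigenvalues_le_sort_roots_getD_one (hι : 2 ≤ Fintype.card ι) :
    ∃ i j, i ≠ j ∧ hM.eigenvalues i ≤ (M.charpoly.roots.sort (· ≤ ·)).getD 1 0 ∧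
      hM.eigenvalues j ≤ (M.charpoly.roots.sort (· ≤ ·)).getD 1 0 := by
  set lam := (M.charpoly.roots.sort (· ≤ ·)).getD 1 0
  have hcount : 2 ≤ M.charpoly.roots.countP (· ≤ lam) :=
    M.charpoly.roots.two_le_countP_le_sort_getD_one
      (by simpa [hM.roots_charpoly_eq_eigenvalues] using hι) 0
  rw [hM.roots_charpoly_eq_eigenvalues, Multiset.countP_map] at hcount
  obtain ⟨i, hi, j, hj, hij⟩ :=
    (Finset.one_lt_card (s := Finset.univ.filter fun i => hM.eigenvalues i ≤ lam)).mp hcount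
  exact ⟨i, j, hij, (Finset.mem_filter.mp hi).2, (Finset.mem_filter.mp hj).2⟩

lemma dotProduct_mulVec_smul_add_smul_le {i j : ι} (hij : i ≠ j) {μ : ℝ}
    (hi : hM.eigenvalues i ≤ μ) (hj : hM.eigenvalues j ≤ μ) (s t : ℝ) :
    (s • ⇑(hM.eigenvectorBasis i) + t • ⇑(hM.eigenvectorBasis j)) ⬝ᵥ
        (M *ᵥ (s • ⇑(hM.eigenvectorBasis i) + t • ⇑(hM.eigenvectorBasis j))) ≤
      μ * ((s • ⇑(hM.eigenvectorBasis i) + t • ⇑(hM.eigenvectorBasis j)) ⬝ᵥ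
        (s • ⇑(hM.eigenvectorBasis i) + t • ⇑(hM.eigenvectorBasis j))) := by
  have hMy : M *ᵥ (s • ⇑(hM.eigenvectorBasis i) + t • ⇑(hM.eigenvectorBasis j)) =
      (hM.eigenvalues i * s) • ⇑(hM.eigenvectorBasis i) +
        (hM.eigenvalues j * t) • ⇑(hM.eigenvectorBasis j) := by
    simp only [mulVec_add, mulVec_smul, hM.mulVec_eigenvectorBasis, smul_smul, mul_comm]
  rw [hMy, (hM.eigenvectorBasis).dotProduct_smul_add_smul_self hij]
  simp only [dotProduct_add, add_dotProduct, dotProduct_smul, smul_dotProduct, smul_eq_mul,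
    OrthonormalBasis.dotProduct_eq_ite, hij, hij.symm, if_true, if_false]
  nlinarith [mul_self_nonneg s, mul_self_nonneg t]

end Matrix.IsHermitian

lemma Matrix.PosSemidef.mulVec_mulVec_eq_zero_of_mul_mul_mulVec_eq_zero {ι : Type*} [Fintype ι]
    {K P : Matrix ι ι ℝ} (hK : K.PosSemidef) (hP : Pᵀ = P) {z : ι → ℝ}
    (hz : (P * K * P) *ᵥ z = 0) : K *ᵥ (P *ᵥ z) = 0 := by
  refine (hK.dotProduct_mulVec_zero_iff _).mp ?_
  have : z ⬝ᵥ (P *ᵥ (K *ᵥ (P *ᵥ z))) = 0 := by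
    rw [mulVec_mulVec, mulVec_mulVec, hz, dotProduct_zero]
  rwa [dotProduct_mulVec, ← mulVec_transpose, hP] at this

section kroneckerOne

variable {V ι : Type*} [Fintype V] [Fintype ι]

lemma Matrix.dotProduct_eq_sum_dotProduct_slice (x y : V × ι → ℝ) :
    x ⬝ᵥ y = ∑ k, (fun v => x (v, k)) ⬝ᵥ (fun v => y (v, k)) := by
  simp only [dotProduct, Fintype.sum_prod_type]
  exact Finset.sum_comm

lemma Matrix.kronecker_one_mulVec_apply [DecidableEq ι] (L : Matrix V V ℝ) (x : V × ι → ℝ)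
    (p : V × ι) :
    ((L ⊗ₖ (1 : Matrix ι ι ℝ)) *ᵥ x) p = (L *ᵥ fun v => x (v, p.2)) p.1 := by
  simp [mulVec, dotProduct, Fintype.sum_prod_type, one_apply]

lemma Matrix.dotProduct_kronecker_one_mulVec [DecidableEq ι] (L : Matrix V V ℝ) (x : V × ι → ℝ) :
    x ⬝ᵥ ((L ⊗ₖ (1 : Matrix ι ι ℝ)) *ᵥ x) =
      ∑ k, (fun v => x (v, k)) ⬝ᵥ (L *ᵥ fun v => x (v, k)) := by
  simp only [dotProduct_eq_sum_dotProduct_slice x, kronecker_one_mulVec_apply]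

lemma SimpleGraph.Connected.apply_eq_of_lapMatrix_kronecker_one_mulVec_eq_zero [DecidableEq V]
    [DecidableEq ι] {G : SimpleGraph V} [DecidableRel G.Adj] (hG : G.Connected) {x : V × ι → ℝ}
    (hx : (G.lapMatrix ℝ ⊗ₖ (1 : Matrix ι ι ℝ)) *ᵥ x = 0) (v w : V) (k : ι) :
    x (v, k) = x (w, k) := by
  have hslice : G.lapMatrix ℝ *ᵥ (fun v => x (v, k)) = 0 := by
    ext v
    simpa [kronecker_one_mulVec_apply] using congrFun hx (v, k)
  exact G.lapMatrix_mulVec_eq_zero_iff_forall_reachable.mp hslice v w (hG.preconnected v w)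

end kroneckerOne

lemma projMat_mulVec {n : ℕ} (a w : Fin n → ℝ) :
    projMat a *ᵥ w = w - ((a ⬝ᵥ a)⁻¹ * (a ⬝ᵥ w)) • a := by
  rw [projMat, sub_mulVec, one_mulVec, smul_mulVec, vecMulVec_mulVec, op_smul_eq_smul, smul_smul]

lemma projMat_transpose {n : ℕ} (a : Fin n → ℝ) : (projMat a)ᵀ = projMat a := by
  simp [projMat, transpose_sub, transpose_smul, transpose_vecMulVec]

lemma dotProduct_projMat_mulVec {n : ℕ} {a : Fin n → ℝ} (ha : a ≠ 0) (w : Fin n → ℝ) :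
    a ⬝ᵥ (projMat a *ᵥ w) = 0 := by
  have haa : a ⬝ᵥ a ≠ 0 := fun h => ha (dotProduct_self_eq_zero.mp h)
  rw [projMat_mulVec, dotProduct_sub, dotProduct_smul, smul_eq_mul]
  field_simp
  ring

lemma projMat_mulVec_eq_self_iff {n : ℕ} {a : Fin n → ℝ} (ha : a ≠ 0) (w : Fin n → ℝ) :
    projMat a *ᵥ w = w ↔ a ⬝ᵥ w = 0 := by
  refine ⟨fun h => h ▸ dotProduct_projMat_mulVec ha w, fun h => ?_⟩
  simp [projMat_mulVec, h]

section blockP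

variable {m n : ℕ}

lemma blockP_mulVec_apply (a : Fin m → Fin n → ℝ) (x : Fin m × Fin n → ℝ) (p : Fin m × Fin n) :
    (blockP a *ᵥ x) p = (projMat (a p.1) *ᵥ fun l => x (p.1, l)) p.2 := by
  simp [blockP, mulVec, dotProduct, Fintype.sum_prod_type, ite_mul]

lemma blockP_transpose (a : Fin m → Fin n → ℝ) : (blockP a)ᵀ = blockP a := by
  ext p q
  by_cases h : p.1 = q.1
  · simp only [transpose_apply, blockP, of_apply, h, if_true]
    rw [← transpose_apply (projMat (a q.1)), projMat_transpose]
  · simp [blockP, h, Ne.symm h]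

lemma blockP_mulVec_eq_self_iff {a : Fin m → Fin n → ℝ} (ha : ∀ i, a i ≠ 0)
    (x : Fin m × Fin n → ℝ) :
    blockP a *ᵥ x = x ↔ ∀ i, a i ⬝ᵥ (fun l => x (i, l)) = 0 := by
  simp only [← projMat_mulVec_eq_self_iff (ha _), funext_iff, Prod.forall, blockP_mulVec_apply]

lemma blockP_mulVec_mulVec {a : Fin m → Fin n → ℝ} (ha : ∀ i, a i ≠ 0) (x : Fin m × Fin n → ℝ) :
    blockP a *ᵥ (blockP a *ᵥ x) = blockP a *ᵥ x :=
  (blockP_mulVec_eq_self_iff ha _).mpr fun i => by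
    simpa only [blockP_mulVec_apply] using dotProduct_projMat_mulVec (ha i) _

lemma blockP_mulVec_eq_zero_of_mulVec_eq_zero {a : Fin m → Fin n → ℝ} (ha : ∀ i, a i ≠ 0)
    (hspan : ∀ w, (∀ i, a i ⬝ᵥ w = 0) → w = 0) {G : SimpleGraph (Fin m)} [DecidableRel G.Adj]
    (hG : G.Connected) {z : Fin m × Fin n → ℝ}
    (hz : (blockP a * (G.lapMatrix ℝ ⊗ₖ (1 : Matrix (Fin n) (Fin n) ℝ)) * blockP a) *ᵥ z = 0) :
    blockP a *ᵥ z = 0 := by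
  set y := blockP a *ᵥ z
  have hLy := PosSemidef.mulVec_mulVec_eq_zero_of_mul_mul_mulVec_eq_zero
    ((G.posSemidef_lapMatrix ℝ).kronecker .one) (blockP_transpose a) hz
  obtain ⟨v₀⟩ := hG.nonempty
  have hslice (i : Fin m) : (fun l => y (i, l)) = fun l => y (v₀, l) :=
    funext (hG.apply_eq_of_lapMatrix_kronecker_one_mulVec_eq_zero hLy i v₀)
  have hw : (fun l => y (v₀, l)) = 0 := hspan _ fun i => by
    rw [← hslice i]
    exact (blockP_mulVec_eq_self_iff ha y).mp (blockP_mulVec_mulVec ha z) i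
  ext ⟨i, l⟩
  exact (congrFun (hslice i) l).trans (congrFun hw l)

lemma exists_blockP_mulVec_eq_self_dotProduct_kronecker_le {a : Fin m → Fin n → ℝ}
    (ha : ∀ i, a i ≠ 0) (hmn : m < n + n) {L : Matrix (Fin m) (Fin m) ℝ} (hL : L.IsHermitian)
    {i j : Fin m} (hij : i ≠ j) {μ : ℝ} (hi : hL.eigenvalues i ≤ μ) (hj : hL.eigenvalues j ≤ μ) :
    ∃ x : Fin m × Fin n → ℝ, blockP a *ᵥ x = x ∧ 0 < x ⬝ᵥ x ∧
      x ⬝ᵥ ((L ⊗ₖ (1 : Matrix (Fin n) (Fin n) ℝ)) *ᵥ x) ≤ μ * (x ⬝ᵥ x) := by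
  set u := ⇑(hL.eigenvectorBasis i)
  set v := ⇑(hL.eigenvectorBasis j)
  set B : Matrix (Fin m) (Fin n ⊕ Fin n) ℝ := of fun r => Sum.elim (u r • a r) (v r • a r)
  obtain ⟨w, hwB, hw0⟩ := Submodule.exists_mem_ne_zero_of_ne_bot
    (LinearMap.ker_ne_bot_of_finrank_lt (f := B.mulVecLin) (by simpa using hmn))
  set x : Fin m × Fin n → ℝ := fun p => u p.1 * w (.inl p.2) + v p.1 * w (.inr p.2)
  have hcol (k : Fin n) : (fun r => x (r, k)) = w (.inl k) • u + w (.inr k) • v := by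
    ext r; simp [x, mul_comm]
  have hxx : x ⬝ᵥ x = w ⬝ᵥ w := by
    rw [dotProduct_eq_sum_dotProduct_slice x x, dotProduct, Fintype.sum_sum_type,
      ← Finset.sum_add_distrib]
    exact Finset.sum_congr rfl fun k _ => by
      rw [hcol]; exact hL.eigenvectorBasis.dotProduct_smul_add_smul_self hij _ _
  refine ⟨x, (blockP_mulVec_eq_self_iff ha x).mpr fun r => ?_,
    hxx ▸ by simpa using dotProduct_star_self_pos_iff.mpr hw0, ?_⟩
  · have hBr := congrFun (LinearMap.mem_ker.mp hwB) r
    simp only [mulVecLin_apply, mulVec, dotProduct, Fintype.sum_sum_type, B, of_apply,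
      Sum.elim_inl, Sum.elim_inr, Pi.smul_apply, smul_eq_mul, Pi.zero_apply] at hBr
    rw [← hBr, dotProduct, ← Finset.sum_add_distrib]
    exact Finset.sum_congr rfl fun l _ => by ring
  · rw [dotProduct_kronecker_one_mulVec, dotProduct_eq_sum_dotProduct_slice x x, Finset.mul_sum]
    refine Finset.sum_le_sum fun k _ => ?_
    rw [hcol]
    exact hL.dotProduct_mulVec_smul_add_smul_le hij hi hj _ _

end blockP

/-- Let `A` be invertible, `G` connected with `n ≥ 2` vertices, `ρ` the
smallest nonzero eigenvalue of `P L̄ P` and `λ₂(L)` the second-smallest eigenvalue of the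
Laplacian `L` counted with multiplicity (the entry of index 1 in the nondecreasingly sorted
list of roots of its characteristic polynomial). Then `ρ ≤ λ₂(L)`. -/
theorem rho_le_lambda2
    {n : ℕ} (hn : 2 ≤ n)
    (A : Matrix (Fin n) (Fin n) ℝ) (hA : IsUnit A.det)
    (G : SimpleGraph (Fin n)) [DecidableRel G.Adj] (hG : G.Connected)
    (ρ lam2 : ℝ)
    (hρ : IsLeast {μ : ℝ | μ ≠ 0 ∧
      (blockP (fun i => A i) * (G.lapMatrix ℝ ⊗ₖ (1 : Matrix (Fin n) (Fin n) ℝ))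
        * blockP (fun i => A i)).charpoly.IsRoot μ} ρ)
    (hlam2 : lam2 = ((G.lapMatrix ℝ).charpoly.roots.sort (· ≤ ·)).getD 1 0) :
    ρ ≤ lam2 := by
  set P := blockP (fun i => A i)
  set Lbar := G.lapMatrix ℝ ⊗ₖ (1 : Matrix (Fin n) (Fin n) ℝ)
  have hrow (i : Fin n) : A i ≠ 0 := fun h =>
    hA.ne_zero (det_eq_zero_of_row_eq_zero i (congrFun h))
  have hspan (w : Fin n → ℝ) (hw : ∀ i, A i ⬝ᵥ w = 0) : w = 0 :=
    eq_zero_of_mulVec_eq_zero hA.ne_zero (funext hw)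
  have hM : (P * Lbar * P).IsHermitian := by
    simpa [conjTranspose_eq_transpose_of_trivial, P, blockP_transpose] using
      (((G.posSemidef_lapMatrix ℝ).kronecker (.one (n := Fin n))).conjTranspose_mul_mul_same P).1
  have hL := (G.posSemidef_lapMatrix ℝ).1
  obtain ⟨i, j, hij, hi, hj⟩ :=
    hL.exists_ne_eigenvalues_le_sort_roots_getD_one (by simpa using hn)
  obtain ⟨x, hPx, hxx, hLx⟩ := exists_blockP_mulVec_eq_self_dotProduct_kronecker_le
    (a := fun i => A i) hrow (by omega) hL hij hi hj
  have hkerM (f) (hf : (P * Lbar * P) *ᵥ f = 0) : f ⬝ᵥ x = 0 := by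
    rw [← hPx, dotProduct_mulVec, ← mulVec_transpose, blockP_transpose,
      blockP_mulVec_eq_zero_of_mulVec_eq_zero hrow hspan hG hf, zero_dotProduct]
  have hMx : x ⬝ᵥ ((P * Lbar * P) *ᵥ x) = x ⬝ᵥ (Lbar *ᵥ x) := by
    rw [← mulVec_mulVec, ← mulVec_mulVec, hPx, dotProduct_mulVec, ← mulVec_transpose,
      blockP_transpose, hPx]
  have hρx := hM.mul_dotProduct_self_le_dotProduct_mulVec
    (fun k hk => hρ.2 ⟨hk, hM.isRoot_charpoly_eigenvalues k⟩) hkerM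
  rw [hlam2]
  exact le_of_mul_le_mul_right (hρx.trans (hMx ▸ hLx)) hxx
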